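/- Fix K, L, M, the partitions {K_n}, {L_n}, and the families 𝒦, ℒ, ℳ. Let 𝔸⁰ be a countable approximation and let K' ∈ 𝒦 be infinite. Then there is a countable approximation 𝔸¹ ⪰ 𝔸⁰ such that F¹_y ∩ K' is infinite for some y ∈ γ¹. -/

import Mathlib

/-- `U` is open in the topology on the set `Xc` generated by the base
`⟨B i : i < ν⟩`: `U ⊆ Xc` and every point of `U` lies in a basic set contained in `U`. -/
def IsOpenIn {α : Type*} (Xc : Set α) (ν : Ordinal) (B : Ordinal → Set α) (U : Set α) : Prop :=
  U ⊆ Xc ∧ ∀ x ∈ U, ∃ i < ν, x ∈ B i ∧ B i ⊆ U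

/-- `⟨Xc, ⟨B i : i < ν⟩⟩` is a *description*: the ordinal-indexed family
`⟨B i : i < ν⟩` consists of subsets of `Xc` and forms a base of clopen sets for a
zero-dimensional Hausdorff topology on `Xc`. -/
def IsDescription {α : Type*} (Xc : Set α) (ν : Ordinal) (B : Ordinal → Set α) : Prop :=
  (∀ i < ν, B i ⊆ Xc) ∧
  (⋃ i ∈ Set.Iio ν, B i) = Xc ∧
  (∀ i < ν, ∀ j < ν, ∀ x ∈ B i ∩ B j, ∃ k < ν, x ∈ B k ∧ B k ⊆ B i ∩ B j) ∧
  (∀ i < ν, IsOpenIn Xc ν B (Xc \ B i)) ∧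
  (∀ x ∈ Xc, ∀ y ∈ Xc, x ≠ y →
    ∃ i < ν, ∃ j < ν, x ∈ B i ∧ y ∈ B j ∧ B i ∩ B j = ∅)

/-- The partial order `⪯` on descriptions. -/
def DescLE {α : Type*} (X0 : Set α) (ν0 : Ordinal) (B0 : Ordinal → Set α)
    (X1 : Set α) (ν1 : Ordinal) (B1 : Ordinal → Set α) : Prop :=
  X0 ⊆ X1 ∧ ν0 ≤ ν1 ∧
  (∀ i < ν0, B1 i ∩ X0 = B0 i) ∧
  (∀ i < ν0, ∀ j < ν0, (B0 i ⊆ B0 j ↔ B1 i ⊆ B1 j)) ∧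
  (∀ i < ν0, ∀ j < ν0, (B0 i ∩ B0 j = ∅ ↔ B1 i ∩ B1 j = ∅))

/-- The set `A` converges to the point `x` in the topology on `Xc` generated by the base
`⟨B i : i < ν⟩`: every open set containing `x` contains all but finitely many
elements of `A`. -/
def ConvIn {α : Type*} (Xc : Set α) (ν : Ordinal) (B : Ordinal → Set α)
    (A : Set α) (x : α) : Prop :=
  ∀ U : Set α, IsOpenIn Xc ν B U → x ∈ U → (A \ U).Finite

/-- The set of accumulation points of `A` in the topology on `Xc` generated by the base
`⟨B i : i < ν⟩`: points of `Xc` each of whose open neighbourhoods meets `A` in an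
infinite set. -/
def accIn {α : Type*} (Xc : Set α) (ν : Ordinal) (B : Ordinal → Set α)
    (A : Set α) : Set α :=
  {x | x ∈ Xc ∧ ∀ U : Set α, IsOpenIn Xc ν B U → x ∈ U → (A ∩ U).Infinite}

/-- `A ∈ 𝒦`, i.e. `A ⊆ K` and `A ∩ K_n` is finite for every `n`. -/
def MemKK {α : Type*} (K : Set α) (Kp : ℕ → Set α) (A : Set α) : Prop :=
  A ⊆ K ∧ ∀ n : ℕ, (A ∩ Kp n).Finite

/-- `A ∈ ℒ`, i.e. `A ⊆ L` and `A ∩ L_n` is finite for every `n`. -/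
def MemLL {α : Type*} (L : Set α) (Lp : ℕ → Set α) (A : Set α) : Prop :=
  A ⊆ L ∧ ∀ n : ℕ, (A ∩ Lp n).Finite

/-- The fixed data: `K, L, M` are pairwise disjoint countably infinite sets,
`⟨Kp n⟩` and `⟨Lp n⟩` are partitions of `K` and `L` into infinitely many infinite
pieces, and `emb` is an injective enumeration of the "ordinal part" (representing the
countable ordinals), whose range is disjoint from `K ∪ L ∪ M`. -/
def SetupKLM {α : Type*} (K L M : Set α) (Kp Lp : ℕ → Set α) (emb : Ordinal → α) : Prop :=
  K.Countable ∧ K.Infinite ∧ L.Countable ∧ L.Infinite ∧ M.Countable ∧ M.Infinite ∧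
  Disjoint K L ∧ Disjoint K M ∧ Disjoint L M ∧
  (⋃ n, Kp n) = K ∧ Pairwise (Function.onFun Disjoint Kp) ∧ (∀ n, (Kp n).Infinite) ∧
  (⋃ n, Lp n) = L ∧ Pairwise (Function.onFun Disjoint Lp) ∧ (∀ n, (Lp n).Infinite) ∧
  (∀ a b : Ordinal, a < (Cardinal.aleph 1).ord → b < (Cardinal.aleph 1).ord →
    emb a = emb b → a = b) ∧
  (∀ a : Ordinal, a < (Cardinal.aleph 1).ord → emb a ∉ K ∪ L ∪ M)

/-- The underlying set `X = K ∪ L ∪ M ∪ γ` of an approximation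
(the ordinal `γ` being represented by `emb '' (Set.Iio γ)`). -/
def carrierOf {α : Type*} (K L M : Set α) (emb : Ordinal → α) (γ : Ordinal) : Set α :=
  K ∪ L ∪ M ∪ emb '' Set.Iio γ

/-- `⟨K ∪ L ∪ M ∪ γ, ⟨B i : i < ν⟩, ⟨F y : y < γ⟩⟩` is a *countable approximation*:
`γ, ν < ω₁`; the underlying set is countable and `⟨B i : i < ν⟩` is a description of it;
each `F y` (for `y < γ`) is an infinite member of `𝒦 ∪ ℒ ∪ ℳ` converging to (the point
representing) `y`; and every basic set `B i` meets `M` in an infinite set and meets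
`Kp n` and `Lp n` in infinite sets for all but finitely many `n`. -/
def IsApprox {α : Type*} (K L M : Set α) (Kp Lp : ℕ → Set α) (emb : Ordinal → α)
    (γ ν : Ordinal) (B : Ordinal → Set α) (F : Ordinal → Set α) : Prop :=
  γ < (Cardinal.aleph 1).ord ∧ ν < (Cardinal.aleph 1).ord ∧
  (carrierOf K L M emb γ).Countable ∧
  IsDescription (carrierOf K L M emb γ) ν B ∧
  (∀ y < γ, (F y).Infinite ∧ (MemKK K Kp (F y) ∨ MemLL L Lp (F y) ∨ F y ⊆ M) ∧
    ConvIn (carrierOf K L M emb γ) ν B (F y) (emb y)) ∧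
  (∀ i < ν, (B i ∩ M).Infinite ∧
    ∃ N : ℕ, ∀ n ≥ N, (B i ∩ Kp n).Infinite ∧ (B i ∩ Lp n).Infinite)

/-- The partial order `⪯` on approximations: the descriptions extend each other,
`F¹_y = F⁰_y` whenever `F⁰_y ∈ 𝒦`, and `F¹_y ⊆* F⁰_y` whenever `F⁰_y ∈ ℒ ∪ ℳ`. -/
def ApproxLE {α : Type*} (K L M : Set α) (Kp Lp : ℕ → Set α) (emb : Ordinal → α)
    (γ0 ν0 : Ordinal) (B0 F0 : Ordinal → Set α)
    (γ1 ν1 : Ordinal) (B1 F1 : Ordinal → Set α) : Prop :=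
  γ0 ≤ γ1 ∧
  DescLE (carrierOf K L M emb γ0) ν0 B0 (carrierOf K L M emb γ1) ν1 B1 ∧
  ∀ y < γ0, (MemKK K Kp (F0 y) → F1 y = F0 y) ∧
    ((MemLL L Lp (F0 y) ∨ F0 y ⊆ M) → (F1 y \ F0 y).Finite)

/-
If some `F⁰_y` already meets `K'` in an infinite set, `𝔸¹ = 𝔸⁰` works. Otherwise a new point
`p = γ⁰` is added with a new sequence `D ⊆ K'` converging to it. Going through the countably many
basic sets, one builds a decreasing sequence of clopen sets `C m` that each meet `K'` infinitely
and that decide every basic set; `D` takes one point from each `C m ∩ K'` and avoids the old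
`F⁰_y ∈ 𝒦` modulo finite sets. An old basic set receives `p` exactly when it eventually contains the
chain. The neighbourhoods of `p` are `{p} ∪ (Y ∩ C m)`, where `Y ⊇ D` is padded by a set `Z` that
splits every basic set into two large halves, so that all new basic sets stay large. Cutting `Y`
into the levels `C n \ C (n + 1)` keeps the space Hausdorff and zero-dimensional, and the old
sequences in `ℒ ∪ ℳ` are shrunk by `Z` so that they still converge.
-/

open Set

namespace Approximation

variable {α : Type*}

section Ordinal

lemma countable_Iio_of_lt_omega1 {o : Ordinal} (h : o < (Cardinal.aleph 1).ord) :
    (Iio o).Countable := by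
  rw [Cardinal.ord_aleph, Cardinal.lt_omega_iff_card_lt, Cardinal.lt_aleph_one_iff] at h
  rwa [← Cardinal.le_aleph0_iff_set_countable, Cardinal.mk_Iio_ordinal,
    Cardinal.lift_le_aleph0]

lemma add_lt_omega1 {a b : Ordinal} (ha : a < (Cardinal.aleph 1).ord)
    (hb : b < (Cardinal.aleph 1).ord) : a + b < (Cardinal.aleph 1).ord := by
  rw [Cardinal.ord_aleph] at *
  exact Ordinal.isPrincipal_add_omega 1 ha hb

lemma omega0_lt_omega1 : Ordinal.omega0 < (Cardinal.aleph 1).ord := by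
  rw [Cardinal.ord_aleph]
  exact Ordinal.omega0_lt_omega_one

lemma one_lt_omega1 : 1 < (Cardinal.aleph 1).ord :=
  Ordinal.one_lt_omega0.trans omega0_lt_omega1

lemma exists_nat_eq_add {ν i : Ordinal} (hi : i < ν + Ordinal.omega0) (h : ν ≤ i) :
    ∃ n : ℕ, i = ν + n := by
  have hc : ν + (i - ν) = i := Ordinal.add_sub_cancel_of_le h
  obtain ⟨n, hn⟩ := Ordinal.lt_omega0.mp (by rwa [← add_lt_add_iff_left ν, hc] :
    i - ν < Ordinal.omega0)
  exact ⟨n, by rw [← hc, hn]⟩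

lemma exists_extend_image_eq (ν : Ordinal) (O : Ordinal → Set α) {𝒩 : Set (Set α)}
    (h𝒩 : 𝒩.Countable) (hne : 𝒩.Nonempty) :
    ∃ B₁ : Ordinal → Set α, (∀ i < ν, B₁ i = O i) ∧
      B₁ '' Iio (ν + Ordinal.omega0) = O '' Iio ν ∪ 𝒩 := by
  classical
  obtain ⟨g, rfl⟩ := h𝒩.exists_eq_range hne
  let B₁ : Ordinal → Set α := fun i => if i < ν then O i else ⋃ (n : ℕ) (_ : ν + n = i), g n
  have hg : ∀ n : ℕ, B₁ (ν + n) = g n := fun n => by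
    simp [B₁]
  refine ⟨B₁, fun i hi => if_pos hi, subset_antisymm ?_ ?_⟩
  · rintro _ ⟨i, hi, rfl⟩
    by_cases h : i < ν
    · exact .inl ⟨i, h, (if_pos h).symm⟩
    · obtain ⟨n, rfl⟩ := exists_nat_eq_add hi (not_lt.mp h)
      exact .inr ⟨n, (hg n).symm⟩
  · rintro _ (⟨i, hi, rfl⟩ | ⟨n, rfl⟩)
    · exact ⟨i, mem_Iio.mpr (lt_of_lt_of_le hi le_self_add), if_pos hi⟩
    · exact ⟨ν + n, add_lt_add_right (Ordinal.natCast_lt_omega0 n) ν, hg n⟩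

end Ordinal

section Selection

lemma exists_injective_forall_mem {T : ℕ → Set α} (hT : ∀ j, (T j).Infinite) :
    ∃ f : ℕ → α, Function.Injective f ∧ ∀ j, f j ∈ T j := by
  classical
  choose pick hpick using fun j (s : Finset α) => ((hT j).sdiff s.finite_toSet).nonempty
  let S : ℕ → Finset α := fun j => Nat.rec ∅ (fun j s => insert (pick j s) s) j
  have hS : Monotone S := monotone_nat_of_le_succ fun j => Finset.subset_insert _ _
  refine ⟨fun j => pick j (S j), ?_, fun j => (hpick j (S j)).1⟩
  refine Function.Injective.of_lt_imp_ne fun j k hjk heq => (hpick k (S k)).2 ?_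
  exact hS hjk (heq ▸ Finset.mem_insert_self _ _)

lemma exists_injective_forall_mem_almostDisjoint {T : ℕ → Set α} (hT : ∀ j, (T j).Infinite)
    {𝒢 : Set (Set α)} (h𝒢 : 𝒢.Countable) (hT𝒢 : ∀ j, ∀ G ∈ 𝒢, (T j ∩ G).Finite) :
    ∃ f : ℕ → α, Function.Injective f ∧ (∀ j, f j ∈ T j) ∧ ∀ G ∈ 𝒢, {j | f j ∈ G}.Finite := by
  obtain ⟨G, hG⟩ := (h𝒢.insert ∅).exists_eq_range (insert_nonempty _ _)
  have hTG : ∀ j t, (T j ∩ G t).Finite := fun j t => by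
    rcases (hG ▸ mem_range_self t : G t ∈ insert ∅ 𝒢) with h | h
    · simp [h]
    · exact hT𝒢 j _ h
  have hfresh : ∀ j, (T j \ ⋃ t < j, G t).Infinite := fun j =>
    ((hT j).sdiff ((finite_Iio j).biUnion fun t _ => hTG j t)).mono fun x hx => by
      simp only [mem_sdiff, mem_iUnion, mem_inter_iff, not_exists, not_and] at hx ⊢
      exact ⟨hx.1, fun t ht hxt => hx.2 t ht hx.1 hxt⟩
  obtain ⟨f, hf, hfT⟩ := exists_injective_forall_mem hfresh
  refine ⟨f, hf, fun j => (hfT j).1, fun G₀ hG₀ => ?_⟩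
  obtain ⟨t, rfl⟩ : G₀ ∈ range G := hG ▸ mem_insert_of_mem _ hG₀
  refine (finite_Iic t).subset fun j hj => mem_Iic.mpr (not_lt.mp fun htj => (hfT j).2 ?_)
  exact mem_biUnion htj hj

lemma exists_infinite_almostSubset_almostDisjoint {T : ℕ → Set α} (hanti : Antitone T)
    (hT : ∀ j, (T j).Infinite) {𝒢 : Set (Set α)} (h𝒢 : 𝒢.Countable)
    (hT𝒢 : ∀ G ∈ 𝒢, (T 0 ∩ G).Finite) :
    ∃ D ⊆ T 0, D.Infinite ∧ (∀ m, (D \ T m).Finite) ∧ ∀ G ∈ 𝒢, (D ∩ G).Finite := by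
  obtain ⟨f, hf, hfT, hf𝒢⟩ := exists_injective_forall_mem_almostDisjoint hT h𝒢
    fun j G hG => (hT𝒢 G hG).subset (inter_subset_inter_left _ (hanti (Nat.zero_le j)))
  refine ⟨range f, range_subset_iff.mpr fun j => hanti (Nat.zero_le j) (hfT j),
    infinite_range_of_injective hf, fun m => ?_, fun G hG => ?_⟩
  · refine ((finite_Iio m).image f).subset ?_
    rintro _ ⟨⟨j, rfl⟩, hj⟩
    exact ⟨j, not_le.mp fun hmj => hj (hanti hmj (hfT j)), rfl⟩
  · refine ((hf𝒢 G hG).image f).subset ?_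
    rintro _ ⟨⟨j, rfl⟩, hj⟩
    exact ⟨j, hj, rfl⟩

lemma exists_split_almostDisjoint {𝒜 𝒢 : Set (Set α)} (h𝒜 : 𝒜.Countable) (h𝒢 : 𝒢.Countable)
    (h𝒜inf : ∀ A ∈ 𝒜, A.Infinite) (h𝒜𝒢 : ∀ A ∈ 𝒜, ∀ G ∈ 𝒢, (A ∩ G).Finite) :
    ∃ Z ⊆ ⋃₀ 𝒜, (∀ A ∈ 𝒜, (A ∩ Z).Infinite ∧ (A \ Z).Infinite) ∧
      ∀ G ∈ 𝒢, (Z ∩ G).Finite := by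
  rcases 𝒜.eq_empty_or_nonempty with rfl | hne
  · exact ⟨∅, empty_subset _, by simp, by simp⟩
  obtain ⟨a, rfl⟩ := h𝒜.exists_eq_range hne
  -- `f (φ.symm (r, b, c))` is the `c`-th point chosen in `a r`; it goes into `Z` iff `b`
  let φ : ℕ ≃ ℕ × Bool × ℕ :=
    Nat.pairEquiv.symm.trans ((Equiv.refl ℕ).prodCongr Equiv.boolProdNatEquivNat.symm)
  obtain ⟨f, hf, hfT, hf𝒢⟩ := exists_injective_forall_mem_almostDisjoint
    (T := fun j => a (φ j).1) (fun j => h𝒜inf _ (mem_range_self _)) h𝒢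
    fun j => h𝒜𝒢 _ (mem_range_self _)
  let g : ℕ → Bool → ℕ → α := fun r b c => f (φ.symm (r, b, c))
  have hg : ∀ r b, Function.Injective (g r b) := fun r b c c' h => by
    simpa using hf h
  have hga : ∀ r b c, g r b c ∈ a r := fun r b c => by simpa [g] using hfT (φ.symm (r, b, c))
  refine ⟨f '' {j | (φ j).2.1 = true}, ?_, fun _ ⟨r, hr⟩ => hr ▸ ⟨?_, ?_⟩, fun G hG => ?_⟩
  · rintro _ ⟨j, -, rfl⟩
    exact ⟨_, mem_range_self _, hfT j⟩
  · exact infinite_of_injective_forall_mem (hg r true) fun c =>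
      ⟨hga r true c, φ.symm (r, true, c), by simp, rfl⟩
  · refine infinite_of_injective_forall_mem (hg r false) fun c => ⟨hga r false c, ?_⟩
    rintro ⟨j, hj, hfj⟩
    have := hf hfj
    simp_all
  · refine ((hf𝒢 G hG).image f).subset ?_
    rintro _ ⟨⟨j, -, rfl⟩, hj⟩
    exact ⟨j, hj, rfl⟩

end Selection

section Large

variable {K L M : Set α} {Kp Lp : ℕ → Set α} {T T' : Set α}

def IsLarge (M : Set α) (Kp Lp : ℕ → Set α) (T : Set α) : Prop :=
  (T ∩ M).Infinite ∧ ∃ N : ℕ, ∀ n ≥ N, (T ∩ Kp n).Infinite ∧ (T ∩ Lp n).Infinite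

lemma IsLarge.mono (h : IsLarge M Kp Lp T) (hT : T ⊆ T') : IsLarge M Kp Lp T' :=
  ⟨h.1.mono (inter_subset_inter_left _ hT), h.2.imp fun _ hN n hn =>
    ⟨(hN n hn).1.mono (inter_subset_inter_left _ hT),
      (hN n hn).2.mono (inter_subset_inter_left _ hT)⟩⟩

lemma IsLarge.diff {D : Set α} (h : IsLarge M Kp Lp T) (hM : (D ∩ M).Finite)
    (hK : ∀ n, (D ∩ Kp n).Finite) (hL : ∀ n, (D ∩ Lp n).Finite) : IsLarge M Kp Lp (T \ D) := by
  have key : ∀ {S : Set α}, (T ∩ S).Infinite → (D ∩ S).Finite → ((T \ D) ∩ S).Infinite :=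
    fun hT hD => (hT.sdiff hD).mono fun x hx => ⟨⟨hx.1.1, fun hxD => hx.2 ⟨hxD, hx.1.2⟩⟩, hx.1.2⟩
  exact ⟨key h.1 hM, h.2.imp fun _ hN n hn => ⟨key (hN n hn).1 (hK n), key (hN n hn).2 (hL n)⟩⟩

lemma IsLarge.diff_finite {F : Set α} (h : IsLarge M Kp Lp T) (hF : F.Finite) :
    IsLarge M Kp Lp (T \ F) :=
  h.diff (hF.subset inter_subset_left) (fun _ => hF.subset inter_subset_left)
    fun _ => hF.subset inter_subset_left

lemma IsLarge.diff_memKK {D : Set α} (h : IsLarge M Kp Lp T) (hD : MemKK K Kp D)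
    (hKM : Disjoint K M) (hKL : ∀ n, Disjoint K (Lp n)) : IsLarge M Kp Lp (T \ D) :=
  h.diff (finite_empty.subset fun _ hx => hKM.le_bot ⟨hD.1 hx.1, hx.2⟩) hD.2
    fun n => finite_empty.subset fun _ hx => (hKL n).le_bot ⟨hD.1 hx.1, hx.2⟩

lemma IsLarge.split {U Z : Set α} (hU : IsLarge M Kp Lp U)
    (hZ : ∀ S ∈ insert M (range Kp ∪ range Lp), (U ∩ S).Infinite →
      (U ∩ S ∩ Z).Infinite ∧ ((U ∩ S) \ Z).Infinite) :
    IsLarge M Kp Lp (U ∩ Z) ∧ IsLarge M Kp Lp (U \ Z) := by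
  have h : ∀ S ∈ insert M (range Kp ∪ range Lp), (U ∩ S).Infinite →
      (U ∩ Z ∩ S).Infinite ∧ ((U \ Z) ∩ S).Infinite := fun S hS hinf => by
    rw [inter_right_comm, sdiff_inter_right_comm]
    exact hZ S hS hinf
  obtain ⟨N, hN⟩ := hU.2
  have hM := h M (mem_insert _ _) hU.1
  have hK := fun n hn => h (Kp n) (.inr (.inl (mem_range_self n))) (hN n hn).1
  have hL := fun n hn => h (Lp n) (.inr (.inr (mem_range_self n))) (hN n hn).2
  exact ⟨⟨hM.1, N, fun n hn => ⟨(hK n hn).1, (hL n hn).1⟩⟩,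
    ⟨hM.2, N, fun n hn => ⟨(hK n hn).2, (hL n hn).2⟩⟩⟩

lemma exists_isLarge_split {𝒰 ℱ 𝒢 : Set (Set α)} (h𝒰 : 𝒰.Countable) (hℱ : ℱ.Countable)
    (h𝒢 : 𝒢.Countable) (h𝒰large : ∀ U ∈ 𝒰, IsLarge M Kp Lp U) (hℱinf : ∀ F ∈ ℱ, F.Infinite)
    (hℱ𝒢 : ∀ F ∈ ℱ, ∀ G ∈ 𝒢, (F ∩ G).Finite) (h𝒢K : ∀ G ∈ 𝒢, MemKK K Kp G)
    (hKp : ∀ n, Kp n ⊆ K) (hLp : ∀ n, Lp n ⊆ L) (hKL : Disjoint K L) (hKM : Disjoint K M) :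
    ∃ Z ⊆ K ∪ L ∪ M ∪ ⋃₀ ℱ,
      (∀ U ∈ 𝒰, IsLarge M Kp Lp (U ∩ Z) ∧ IsLarge M Kp Lp (U \ Z)) ∧
      (∀ F ∈ ℱ, (F \ Z).Infinite) ∧ ∀ G ∈ 𝒢, (Z ∩ G).Finite := by
  let 𝒮 := insert M (range Kp ∪ range Lp)
  have h𝒮 : ∀ S ∈ 𝒮, S ⊆ K ∪ L ∪ M := by
    rintro _ (rfl | ⟨n, rfl⟩ | ⟨n, rfl⟩)
    exacts [subset_union_right, (hKp n).trans (subset_union_left.trans subset_union_left),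
      (hLp n).trans (subset_union_right.trans subset_union_left)]
  have h𝒮𝒢 : ∀ S ∈ 𝒮, ∀ G ∈ 𝒢, (S ∩ G).Finite := by
    rintro _ (rfl | ⟨n, rfl⟩ | ⟨n, rfl⟩) G hG
    · exact finite_empty.subset fun x hx => hKM.le_bot ⟨(h𝒢K G hG).1 hx.2, hx.1⟩
    · exact ((h𝒢K G hG).2 n).subset fun x hx => ⟨hx.2, hx.1⟩
    · exact finite_empty.subset fun x hx => hKL.le_bot ⟨(h𝒢K G hG).1 hx.2, hLp n hx.1⟩
  let 𝒜 := {P ∈ image2 (· ∩ ·) 𝒰 𝒮 | P.Infinite}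
  have h𝒜 : 𝒜.Countable := (h𝒰.image2 (((countable_range _).union (countable_range _)).insert _)
    _).mono (sep_subset _ _)
  have h𝒜𝒢 : ∀ A ∈ 𝒜, ∀ G ∈ 𝒢, (A ∩ G).Finite := by
    rintro _ ⟨⟨U, -, S, hS, rfl⟩, -⟩ G hG
    exact (h𝒮𝒢 S hS G hG).subset (inter_subset_inter_left _ inter_subset_right)
  obtain ⟨Z, hZ, hsplit, hZ𝒢⟩ := exists_split_almostDisjoint (h𝒜.union hℱ) h𝒢
    (fun A hA => hA.elim (·.2) (hℱinf A)) fun A hA => hA.elim (h𝒜𝒢 A) (hℱ𝒢 A)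
  refine ⟨Z, fun x hx => ?_, fun U hU => (h𝒰large U hU).split fun S hS hinf =>
    hsplit _ (.inl ⟨⟨U, hU, S, hS, rfl⟩, hinf⟩), fun F hF => (hsplit F (.inr hF)).2, hZ𝒢⟩
  obtain ⟨A, ⟨⟨U, -, S, hS, rfl⟩, -⟩ | hA, hxA⟩ := hZ hx
  exacts [.inl (h𝒮 S hS hxA.2), .inr ⟨A, hA, hxA⟩]

end Large

section Description

variable {X : Set α} {ν : Ordinal} {B : Ordinal → Set α} {𝓑 : Set (Set α)} {U V : Set α}
  {x : α}

lemma _root_.IsDescription.exists_mem (hd : IsDescription X ν B) (hx : x ∈ X) :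
    ∃ i < ν, x ∈ B i := by
  rw [← hd.2.1] at hx
  simpa using hx

lemma _root_.IsDescription.exists_disjoint (hd : IsDescription X ν B) {i : Ordinal} (hi : i < ν)
    (hx : x ∈ X) (hxi : x ∉ B i) : ∃ k < ν, x ∈ B k ∧ Disjoint (B k) (B i) := by
  obtain ⟨k, hk, hxk, hkc⟩ := (hd.2.2.2.1 i hi).2 x ⟨hx, hxi⟩
  exact ⟨k, hk, hxk, disjoint_left.mpr fun z hz => (hkc hz).2⟩

lemma _root_.IsOpenIn.union (hU : IsOpenIn X ν B U) (hV : IsOpenIn X ν B V) :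
    IsOpenIn X ν B (U ∪ V) := by
  refine ⟨union_subset hU.1 hV.1, fun x hx => ?_⟩
  rcases hx with hx | hx
  · obtain ⟨i, hi, hxi, hiU⟩ := hU.2 x hx
    exact ⟨i, hi, hxi, hiU.trans subset_union_left⟩
  · obtain ⟨i, hi, hxi, hiV⟩ := hV.2 x hx
    exact ⟨i, hi, hxi, hiV.trans subset_union_right⟩

lemma _root_.IsOpenIn.inter (hd : IsDescription X ν B) (hU : IsOpenIn X ν B U)
    (hV : IsOpenIn X ν B V) : IsOpenIn X ν B (U ∩ V) := by
  refine ⟨inter_subset_left.trans hU.1, fun x hx => ?_⟩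
  obtain ⟨i, hi, hxi, hiU⟩ := hU.2 x hx.1
  obtain ⟨j, hj, hxj, hjV⟩ := hV.2 x hx.2
  obtain ⟨k, hk, hxk, hkij⟩ := hd.2.2.1 i hi j hj x ⟨hxi, hxj⟩
  exact ⟨k, hk, hxk, hkij.trans (inter_subset_inter hiU hjV)⟩

def IsClopenIn (X : Set α) (ν : Ordinal) (B : Ordinal → Set α) (U : Set α) : Prop :=
  IsOpenIn X ν B U ∧ IsOpenIn X ν B (X \ U)

lemma isClopenIn_self (hd : IsDescription X ν B) : IsClopenIn X ν B X :=
  ⟨⟨subset_rfl, fun _ hx => (hd.exists_mem hx).imp fun i hi => ⟨hi.1, hi.2, hd.1 i hi.1⟩⟩,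
    by simp [IsOpenIn]⟩

lemma isClopenIn_basic (hd : IsDescription X ν B) {i : Ordinal} (hi : i < ν) :
    IsClopenIn X ν B (B i) :=
  ⟨⟨hd.1 i hi, fun _ hx => ⟨i, hi, hx, subset_rfl⟩⟩, hd.2.2.2.1 i hi⟩

lemma IsClopenIn.compl (hU : IsClopenIn X ν B U) : IsClopenIn X ν B (X \ U) :=
  ⟨hU.2, by rw [sdiff_sdiff_cancel_left hU.1.1]; exact hU.1⟩

lemma IsClopenIn.inter (hd : IsDescription X ν B) (hU : IsClopenIn X ν B U)
    (hV : IsClopenIn X ν B V) : IsClopenIn X ν B (U ∩ V) :=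
  ⟨hU.1.inter hd hV.1, by rw [sdiff_inter]; exact hU.2.union hV.2⟩

lemma IsClopenIn.diff (hd : IsDescription X ν B) (hU : IsClopenIn X ν B U)
    (hV : IsClopenIn X ν B V) : IsClopenIn X ν B (U \ V) := by
  rw [← inter_eq_left.mpr hU.1.1, inter_sdiff_assoc]
  exact hU.inter hd hV.compl

lemma isDescription_of_image_eq (hB : B '' Iio ν = 𝓑) (hsub : ∀ T ∈ 𝓑, T ⊆ X)
    (hcover : ∀ x ∈ X, ∃ T ∈ 𝓑, x ∈ T)
    (hinter : ∀ T ∈ 𝓑, ∀ U ∈ 𝓑, ∀ x ∈ T ∩ U, ∃ S ∈ 𝓑, x ∈ S ∧ S ⊆ T ∩ U)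
    (hsep : ∀ T ∈ 𝓑, ∀ x ∈ X, x ∉ T → ∃ S ∈ 𝓑, x ∈ S ∧ Disjoint S T)
    (hT0 : ∀ x ∈ X, ∀ y ∈ X, x ≠ y → ∃ T ∈ 𝓑, x ∈ T ∧ y ∉ T ∨ y ∈ T ∧ x ∉ T) :
    IsDescription X ν B := by
  subst hB
  simp only [forall_mem_image, exists_mem_image, mem_Iio] at *
  refine ⟨hsub, ?_, hinter, fun i hi => ⟨sdiff_subset, fun x hx => ?_⟩, fun x hx y hy hxy => ?_⟩
  · refine subset_antisymm (iUnion₂_subset fun i hi => hsub hi) fun x hx => ?_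
    obtain ⟨i, hi, hxi⟩ := hcover x hx
    exact mem_biUnion (mem_Iio.mpr hi) hxi
  · obtain ⟨k, hk, hxk, hki⟩ := hsep hi x hx.1 hx.2
    exact ⟨k, hk, hxk, fun z hz => ⟨hsub hk hz, disjoint_left.mp hki hz⟩⟩
  obtain ⟨i, hi, ⟨hxi, hyi⟩ | ⟨hyi, hxi⟩⟩ := hT0 x hx y hy hxy
  · obtain ⟨j, hj, hyj, hji⟩ := hsep hi y hy hyi
    exact ⟨i, hi, j, hj, hxi, hyj, (disjoint_iff_inter_eq_empty.mp hji.symm)⟩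
  · obtain ⟨j, hj, hxj, hji⟩ := hsep hi x hx hxi
    exact ⟨j, hj, i, hi, hxj, hyi, disjoint_iff_inter_eq_empty.mp hji⟩

lemma convIn_of_image_eq (hB : B '' Iio ν = 𝓑) {A : Set α}
    (h : ∀ T ∈ 𝓑, x ∈ T → (A \ T).Finite) : ConvIn X ν B A x := fun U hU hxU => by
  obtain ⟨i, hi, hxi, hiU⟩ := hU.2 x hxU
  exact (h _ (hB ▸ mem_image_of_mem B hi) hxi).subset (sdiff_subset_sdiff_right hiU)

lemma _root_.ConvIn.mono {A A' : Set α} (h : ConvIn X ν B A x) (hA : A' ⊆ A) :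
    ConvIn X ν B A' x :=
  fun U hU hxU => (h U hU hxU).subset (sdiff_subset_sdiff_left hA)

structure IsDecidingChain (X : Set α) (ν : Ordinal) (B : Ordinal → Set α) (C : ℕ → Set α) :
    Prop where
  zero : C 0 = X
  antitone : Antitone C
  clopen : ∀ m, IsClopenIn X ν B (C m)
  nonempty : ∀ m, (C m).Nonempty
  decides : ∀ i < ν, ∃ m, C m ⊆ B i ∨ Disjoint (C m) (B i)

lemma exists_clopen_half (hd : IsDescription X ν B) {S A : Set α} (hS : IsClopenIn X ν B S)
    (hSA : (S ∩ A).Infinite) (hU : IsClopenIn X ν B U) :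
    ∃ S' ⊆ S, IsClopenIn X ν B S' ∧ (S' ∩ A).Infinite ∧ (S' ⊆ U ∨ Disjoint S' U) := by
  by_cases h : (S ∩ U ∩ A).Infinite
  · exact ⟨S ∩ U, inter_subset_left, hS.inter hd hU, h, .inl inter_subset_right⟩
  refine ⟨S \ U, sdiff_subset, hS.diff hd hU, ?_, .inr disjoint_sdiff_left⟩
  rw [← inter_union_sdiff S U, union_inter_distrib_right, infinite_union] at hSA
  exact hSA.resolve_left h

lemma exists_isDecidingChain (hd : IsDescription X ν B) (hν : (Iio ν).Countable) {A : Set α}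
    (hAX : A ⊆ X) (hA : A.Infinite) :
    ∃ C, IsDecidingChain X ν B C ∧ ∀ m, (C m ∩ A).Infinite := by
  obtain ⟨i₀, hi₀, -⟩ := hd.exists_mem (hAX hA.nonempty.some_mem)
  obtain ⟨e, he⟩ := hν.exists_eq_range ⟨i₀, hi₀⟩
  have hev : ∀ m, e m < ν := fun m => (he ▸ mem_range_self m : e m ∈ Iio ν)
  choose next hnext using fun m (S : {S // IsClopenIn X ν B S ∧ (S ∩ A).Infinite}) =>
    exists_clopen_half hd S.2.1 S.2.2 (isClopenIn_basic hd (hev m))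
  let c : ℕ → {S // IsClopenIn X ν B S ∧ (S ∩ A).Infinite} := fun m =>
    Nat.rec ⟨X, isClopenIn_self hd, by rwa [inter_eq_right.mpr hAX]⟩
      (fun m S => ⟨next m S, (hnext m S).2.1, (hnext m S).2.2.1⟩) m
  refine ⟨fun m => (c m).1, ⟨rfl, antitone_nat_of_succ_le fun m => (hnext m (c m)).1,
    fun m => (c m).2.1, fun m => (c m).2.2.nonempty.mono inter_subset_left, fun i hi => ?_⟩,
    fun m => (c m).2.2⟩
  obtain ⟨m, rfl⟩ : i ∈ range e := he ▸ hi
  exact ⟨m + 1, (hnext m (c m)).2.2.2⟩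

lemma IsDecidingChain.subsingleton_iInter (hd : IsDescription X ν B) {C : ℕ → Set α}
    (hC : IsDecidingChain X ν B C) : (⋂ m, C m).Subsingleton := by
  intro x hx y hy
  rw [mem_iInter] at hx hy
  by_contra hxy
  obtain ⟨i, hi, j, hj, hxi, hyj, hij⟩ :=
    hd.2.2.2.2 x (hC.zero ▸ hx 0) y (hC.zero ▸ hy 0) hxy
  obtain ⟨m, hm | hm⟩ := hC.decides i hi
  · exact (eq_empty_iff_forall_notMem.mp hij) y ⟨hm (hy m), hyj⟩
  · exact disjoint_left.mp hm (hx m) hxi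

end Description

section Extension

variable {X : Set α} {ν : Ordinal} {B : Ordinal → Set α} {p : α} {C : ℕ → Set α} {Y : Set α}
  {U U' T : Set α} {x z : α} {ν₁ : Ordinal} {B₁ : Ordinal → Set α}

def adjoinLimit (p : α) (C : ℕ → Set α) (U : Set α) : Set α :=
  U ∪ {y | y = p ∧ ∃ m, C m ⊆ U}

def limitNbhd (p : α) (Y : Set α) (C : ℕ → Set α) (m : ℕ) : Set α :=
  insert p (Y ∩ C m)

open Classical in
/-- The strata are `Yᶜ` and the levels `Y ∩ (C n \ C (n + 1))`. -/
noncomputable def stratumKey (Y : Set α) (C : ℕ → Set α) (x : α) : Option (Set ℕ) :=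
  if x ∈ Y then some {n | x ∈ C n} else none

def stratum (Y : Set α) (C : ℕ → Set α) (x : α) : Set α :=
  {z | stratumKey Y C z = stratumKey Y C x}

/-- A base for `insert p X` in which the points of `Y` converge to `p` along the chain `C`: old
basic sets (with `p` added when they eventually contain the chain), the neighbourhoods
`insert p (Y ∩ C m)` of `p`, and old basic sets cut down to a stratum. -/
def extensionBasis (ν : Ordinal) (B : Ordinal → Set α) (p : α) (C : ℕ → Set α) (Y : Set α) :
    Set (Set α) :=
  (fun i => adjoinLimit p C (B i)) '' Iio ν ∪
    (range (limitNbhd p Y C) ∪ {T | ∃ i < ν, ∃ x ∈ B i, T = B i ∩ stratum Y C x})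

lemma mem_stratum_self : x ∈ stratum Y C x := rfl

lemma mem_stratum_iff :
    z ∈ stratum Y C x ↔ (z ∈ Y ↔ x ∈ Y) ∧ (x ∈ Y → ∀ n, z ∈ C n ↔ x ∈ C n) := by
  by_cases hz : z ∈ Y <;> by_cases hx : x ∈ Y <;>
    simp [stratum, stratumKey, hz, hx, Set.ext_iff]

lemma stratum_eq_of_mem (h : z ∈ stratum Y C x) : stratum Y C z = stratum Y C x := by
  ext w
  change stratumKey Y C w = stratumKey Y C z ↔ stratumKey Y C w = stratumKey Y C x
  rw [show stratumKey Y C z = stratumKey Y C x from h]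

lemma stratum_of_notMem (hxY : x ∉ Y) : stratum Y C x = Yᶜ := by
  ext z
  simp [mem_stratum_iff, hxY]

lemma mem_limitNbhd_iff_of_mem_stratum (h : z ∈ stratum Y C x) (hz : z ≠ p) (hx : x ≠ p)
    (m : ℕ) : z ∈ limitNbhd p Y C m ↔ x ∈ limitNbhd p Y C m := by
  rw [mem_stratum_iff] at h
  simp only [limitNbhd, mem_insert_iff, hz, hx, false_or, mem_inter_iff]
  by_cases hxY : x ∈ Y
  · rw [h.1, h.2 hxY m]
  · simp [hxY, h.1]

lemma exists_disjoint_stratum (hYC : ∀ y ∈ Y, ∃ m, y ∉ C m) (x : α) :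
    ∃ m, Disjoint (Y ∩ C m) (stratum Y C x) := by
  by_cases hxY : x ∈ Y
  · obtain ⟨m, hm⟩ := hYC x hxY
    refine ⟨m, disjoint_left.mpr fun z hz hzx => hm ?_⟩
    exact ((mem_stratum_iff.mp hzx).2 hxY m).mp hz.2
  · exact ⟨0, disjoint_left.mpr fun z hz hzx => hxY ((mem_stratum_iff.mp hzx).1.mp hz.1)⟩

lemma exists_notMem_limitNbhd (hYC : ∀ y ∈ Y, ∃ m, y ∉ C m) (hxp : x ≠ p) :
    ∃ m, x ∉ limitNbhd p Y C m := by
  obtain ⟨m, hm⟩ := exists_disjoint_stratum hYC x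
  exact ⟨m, fun hx => disjoint_left.mp hm ((mem_insert_iff.mp hx).resolve_left hxp)
    mem_stratum_self⟩

lemma inter_diff_subset_stratum (hC : Antitone C) {n : ℕ} (hxY : x ∈ Y) (hxn : x ∈ C n)
    (hxn' : x ∉ C (n + 1)) : Y ∩ (C n \ C (n + 1)) ⊆ stratum Y C x := by
  rintro z ⟨hzY, hzn, hzn'⟩
  refine mem_stratum_iff.mpr ⟨iff_of_true hzY hxY, fun _ k => ?_⟩
  rcases le_or_gt k n with hk | hk
  · exact iff_of_true (hC hk hzn) (hC hk hxn)
  · exact iff_of_false (fun h => hzn' (hC hk h)) fun h => hxn' (hC hk h)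

lemma exists_mem_notMem_succ {C : ℕ → Set α} (h₀ : x ∈ C 0) (h : ∃ m, x ∉ C m) :
    ∃ n, x ∈ C n ∧ x ∉ C (n + 1) := by
  by_contra! hall
  obtain ⟨m, hm⟩ := h
  exact hm (Nat.rec h₀ hall m)

lemma adjoinLimit_inter (hp : p ∉ X) (hU : U ⊆ X) : adjoinLimit p C U ∩ X = U := by
  refine subset_antisymm (fun z ⟨hz, hzX⟩ => hz.resolve_right fun h => hp (h.1 ▸ hzX)) ?_
  exact fun z hz => ⟨.inl hz, hU hz⟩

lemma mem_adjoinLimit_of_ne (hx : x ≠ p) : x ∈ adjoinLimit p C U ↔ x ∈ U :=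
  ⟨fun h => h.resolve_right fun h' => hx h'.1, .inl⟩

lemma self_mem_adjoinLimit (hp : p ∉ U) : p ∈ adjoinLimit p C U ↔ ∃ m, C m ⊆ U :=
  ⟨fun h => (h.resolve_left hp).2, fun h => .inr ⟨rfl, h⟩⟩

lemma adjoinLimit_mono (h : U ⊆ U') : adjoinLimit p C U ⊆ adjoinLimit p C U' :=
  union_subset_union h fun _ hz => ⟨hz.1, hz.2.imp fun _ hm => hm.trans h⟩

lemma disjoint_adjoinLimit (hC : Antitone C) (hne : ∀ m, (C m).Nonempty) (hpU : p ∉ U)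
    (hpU' : p ∉ U') (h : Disjoint U U') : Disjoint (adjoinLimit p C U) (adjoinLimit p C U') := by
  refine disjoint_left.mpr fun z hz hz' => ?_
  rcases hz with hz | ⟨rfl, m, hm⟩ <;> rcases hz' with hz' | ⟨hzp, m', hm'⟩
  · exact disjoint_left.mp h hz hz'
  · exact hpU (hzp ▸ hz)
  · exact hpU' hz'
  · obtain ⟨w, hw⟩ := hne (max m m')
    exact disjoint_left.mp h (hm (hC (le_max_left _ _) hw)) (hm' (hC (le_max_right _ _) hw))

lemma subset_insert_of_mem_extensionBasis (hd : IsDescription X ν B) (hYX : Y ⊆ X)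
    (hT : T ∈ extensionBasis ν B p C Y) : T ⊆ insert p X := by
  rcases hT with ⟨i, hi, rfl⟩ | ⟨m, rfl⟩ | ⟨i, hi, y, -, rfl⟩
  · rintro z (hz | ⟨rfl, -⟩)
    exacts [.inr (hd.1 i hi hz), mem_insert _ _]
  · exact insert_subset_insert (inter_subset_left.trans hYX)
  · exact inter_subset_left.trans ((hd.1 i hi).trans (subset_insert _ _))

lemma exists_limitNbhd_subset (hC : Antitone C) (hpB : ∀ i < ν, p ∉ B i)
    (hT : T ∈ extensionBasis ν B p C Y) (hpT : p ∈ T) :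
    ∃ m₀, ∀ m ≥ m₀, limitNbhd p Y C m ⊆ T := by
  rcases hT with ⟨i, hi, rfl⟩ | ⟨m₀, rfl⟩ | ⟨i, hi, y, -, rfl⟩
  · obtain ⟨m₀, hm₀⟩ := (self_mem_adjoinLimit (hpB i hi)).mp hpT
    exact ⟨m₀, fun m hm => insert_subset hpT fun z hz => .inl (hm₀ (hC hm hz.2))⟩
  · exact ⟨m₀, fun m hm => insert_subset_insert (inter_subset_inter_right _ (hC hm))⟩
  · exact absurd hpT.1 (hpB i hi)

lemma exists_stratum_subset (hd : IsDescription X ν B) (hp : p ∉ X)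
    (hT : T ∈ extensionBasis ν B p C Y) (hxT : x ∈ T) (hx : x ∈ X) :
    ∃ i < ν, x ∈ B i ∧ ∀ k, B k ⊆ B i → B k ∩ stratum Y C x ⊆ T := by
  have hxp : x ≠ p := fun h => hp (h ▸ hx)
  rcases hT with ⟨i, hi, rfl⟩ | ⟨m, rfl⟩ | ⟨i, hi, y, -, rfl⟩
  · exact ⟨i, hi, (mem_adjoinLimit_of_ne hxp).mp hxT, fun k hk z hz => .inl (hk hz.1)⟩
  · obtain ⟨i, hi, hxi⟩ := hd.exists_mem hx
    refine ⟨i, hi, hxi, fun k hk z hz => ?_⟩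
    have hzp : z ≠ p := fun h => hp (h ▸ hd.1 i hi (hk hz.1))
    exact (mem_limitNbhd_iff_of_mem_stratum hz.2 hzp hxp m).mpr hxT
  · refine ⟨i, hi, hxT.1, fun k hk z hz => ⟨hk hz.1, ?_⟩⟩
    rw [← stratum_eq_of_mem hxT.2]
    exact hz.2

lemma exists_limitNbhd_disjoint (hC : IsDecidingChain X ν B C) (hpB : ∀ i < ν, p ∉ B i)
    (hYC : ∀ y ∈ Y, ∃ m, y ∉ C m) (hT : T ∈ extensionBasis ν B p C Y) (hpT : p ∉ T) :
    ∃ m, Disjoint (limitNbhd p Y C m) T := by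
  rcases hT with ⟨i, hi, rfl⟩ | ⟨m, rfl⟩ | ⟨i, hi, y, -, rfl⟩
  · obtain ⟨m, hm | hm⟩ := hC.decides i hi
    · exact absurd ((self_mem_adjoinLimit (hpB i hi)).mpr ⟨m, hm⟩) hpT
    refine ⟨m, disjoint_left.mpr fun z hz hzT => ?_⟩
    rcases hz with rfl | hz
    · exact hpT hzT
    rcases hzT with hzB | ⟨rfl, h⟩
    exacts [disjoint_left.mp hm hz.2 hzB, hpT (.inr ⟨rfl, h⟩)]
  · exact absurd (mem_insert _ _) hpT
  · obtain ⟨m, hm⟩ := exists_disjoint_stratum hYC y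
    refine ⟨m, disjoint_left.mpr fun z hz hzT => ?_⟩
    rcases hz with rfl | hz
    exacts [hpT hzT, disjoint_left.mp hm hz hzT.2]

lemma exists_stratum_disjoint (hd : IsDescription X ν B) (hp : p ∉ X)
    (hT : T ∈ extensionBasis ν B p C Y) (hx : x ∈ X) (hxT : x ∉ T) :
    ∃ k < ν, x ∈ B k ∧ Disjoint (B k ∩ stratum Y C x) T := by
  have hBp : ∀ k < ν, ∀ z ∈ B k, z ≠ p := fun k hk z hz h => hp (h ▸ hd.1 k hk hz)
  have hout : ∀ i < ν, x ∉ B i → ∃ k < ν, x ∈ B k ∧ Disjoint (B k ∩ stratum Y C x) (B i) :=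
    fun i hi hxi => (hd.exists_disjoint hi hx hxi).imp fun k ⟨hk, hxk, hki⟩ =>
      ⟨hk, hxk, hki.mono_left inter_subset_left⟩
  rcases hT with ⟨i, hi, rfl⟩ | ⟨m, rfl⟩ | ⟨i, hi, y, -, rfl⟩
  · obtain ⟨k, hk, hxk, hki⟩ := hout i hi fun h => hxT (.inl h)
    refine ⟨k, hk, hxk, disjoint_left.mpr fun z hz hzT => disjoint_left.mp hki hz ?_⟩
    exact (mem_adjoinLimit_of_ne (hBp k hk z hz.1)).mp hzT
  · obtain ⟨k, hk, hxk⟩ := hd.exists_mem hx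
    refine ⟨k, hk, hxk, disjoint_left.mpr fun z hz hzT => hxT ?_⟩
    exact (mem_limitNbhd_iff_of_mem_stratum hz.2 (hBp k hk z hz.1) (hBp k hk x hxk) m).mp hzT
  · by_cases hxi : x ∈ B i
    · obtain ⟨k, hk, hxk⟩ := hd.exists_mem hx
      refine ⟨k, hk, hxk, disjoint_left.mpr fun z hz hzT => hxT ⟨hxi, ?_⟩⟩
      rw [← (stratum_eq_of_mem hz.2).symm.trans (stratum_eq_of_mem hzT.2)]
      exact mem_stratum_self
    · obtain ⟨k, hk, hxk, hki⟩ := hout i hi hxi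
      exact ⟨k, hk, hxk, hki.mono_right inter_subset_left⟩

lemma exists_mem_extensionBasis_subset_inter (hd : IsDescription X ν B) (hC : Antitone C)
    (hp : p ∉ X) (hYX : Y ⊆ X) {U : Set α} (hT : T ∈ extensionBasis ν B p C Y)
    (hU : U ∈ extensionBasis ν B p C Y) (hx : x ∈ T ∩ U) :
    ∃ S ∈ extensionBasis ν B p C Y, x ∈ S ∧ S ⊆ T ∩ U := by
  by_cases hxp : x = p
  · subst hxp
    have hpB : ∀ i < ν, x ∉ B i := fun i hi h => hp (hd.1 i hi h)
    obtain ⟨m, hm⟩ := exists_limitNbhd_subset hC hpB hT hx.1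
    obtain ⟨m', hm'⟩ := exists_limitNbhd_subset hC hpB hU hx.2
    exact ⟨_, .inr (.inl ⟨max m m', rfl⟩), mem_insert _ _,
      subset_inter (hm _ (le_max_left _ _)) (hm' _ (le_max_right _ _))⟩
  have hxX := (subset_insert_of_mem_extensionBasis hd hYX hT hx.1).resolve_left hxp
  obtain ⟨i, hi, hxi, hiT⟩ := exists_stratum_subset hd hp hT hx.1 hxX
  obtain ⟨j, hj, hxj, hjU⟩ := exists_stratum_subset hd hp hU hx.2 hxX
  obtain ⟨k, hk, hxk, hkij⟩ := hd.2.2.1 i hi j hj x ⟨hxi, hxj⟩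
  exact ⟨_, .inr (.inr ⟨k, hk, x, hxk, rfl⟩), ⟨hxk, mem_stratum_self⟩,
    subset_inter (hiT k (hkij.trans inter_subset_left)) (hjU k (hkij.trans inter_subset_right))⟩

lemma exists_mem_extensionBasis_separating (hd : IsDescription X ν B) (hp : p ∉ X)
    (hYC : ∀ y ∈ Y, ∃ m, y ∉ C m) {y : α} (hx : x ∈ insert p X) (hy : y ∈ insert p X)
    (hxy : x ≠ y) : ∃ T ∈ extensionBasis ν B p C Y, x ∈ T ∧ y ∉ T ∨ y ∈ T ∧ x ∉ T := by
  rcases hx with rfl | hx <;> rcases hy with rfl | hy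
  · exact absurd rfl hxy
  · obtain ⟨m, hm⟩ := exists_notMem_limitNbhd hYC (Ne.symm hxy)
    exact ⟨_, .inr (.inl ⟨m, rfl⟩), .inl ⟨mem_insert _ _, hm⟩⟩
  · obtain ⟨m, hm⟩ := exists_notMem_limitNbhd hYC hxy
    exact ⟨_, .inr (.inl ⟨m, rfl⟩), .inr ⟨mem_insert _ _, hm⟩⟩
  · obtain ⟨i, hi, j, hj, hxi, hyj, hij⟩ := hd.2.2.2.2 x hx y hy hxy
    refine ⟨_, .inl ⟨i, hi, rfl⟩, .inl ⟨.inl hxi, fun hyi => ?_⟩⟩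
    have hyp : y ≠ p := fun h => hp (h ▸ hy)
    exact (eq_empty_iff_forall_notMem.mp hij) y ⟨(mem_adjoinLimit_of_ne hyp).mp hyi, hyj⟩

lemma isDescription_extension (hd : IsDescription X ν B) (hC : IsDecidingChain X ν B C)
    (hp : p ∉ X) (hYX : Y ⊆ X) (hYC : ∀ y ∈ Y, ∃ m, y ∉ C m)
    (hB₁ : B₁ '' Iio ν₁ = extensionBasis ν B p C Y) : IsDescription (insert p X) ν₁ B₁ := by
  refine isDescription_of_image_eq hB₁ (fun T hT => subset_insert_of_mem_extensionBasis hd hYX hT)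
    (fun x hx => ?_) (fun T hT U hU x hx => exists_mem_extensionBasis_subset_inter hd hC.antitone
      hp hYX hT hU hx) (fun T hT x hx hxT => ?_)
    (fun x hx y hy hxy => exists_mem_extensionBasis_separating hd hp hYC hx hy hxy)
  · rcases hx with rfl | hx
    · exact ⟨_, .inr (.inl ⟨0, rfl⟩), mem_insert _ _⟩
    · obtain ⟨i, hi, hxi⟩ := hd.exists_mem hx
      exact ⟨_, .inl ⟨i, hi, rfl⟩, .inl hxi⟩
  · rcases hx with rfl | hx
    · obtain ⟨m, hm⟩ := exists_limitNbhd_disjoint hC (fun i hi h => hp (hd.1 i hi h)) hYC hT hxT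
      exact ⟨_, .inr (.inl ⟨m, rfl⟩), mem_insert _ _, hm⟩
    · obtain ⟨k, hk, hxk, hk'⟩ := exists_stratum_disjoint hd hp hT hx hxT
      exact ⟨_, .inr (.inr ⟨k, hk, x, hxk, rfl⟩), ⟨hxk, mem_stratum_self⟩, hk'⟩

lemma countable_extensionBasis (hd : IsDescription X ν B) (hν : (Iio ν).Countable)
    (hX : X.Countable) : (extensionBasis ν B p C Y).Countable := by
  refine (hν.image _).union ((countable_range _).union
    (((hν.prod hX).image fun q => B q.1 ∩ stratum Y C q.2).mono ?_))
  rintro _ ⟨i, hi, x, hx, rfl⟩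
  exact ⟨(i, x), ⟨hi, hd.1 i hi hx⟩, rfl⟩

lemma isLarge_of_mem_extensionBasis {M : Set α} {Kp Lp : ℕ → Set α} (hd : IsDescription X ν B)
    (hC : IsDecidingChain X ν B C) (hYX : Y ⊆ X) (hYC : ∀ y ∈ Y, ∃ m, y ∉ C m)
    (hB : ∀ i < ν, IsLarge M Kp Lp (B i)) (hYB : ∀ i < ν, IsLarge M Kp Lp (Y ∩ B i))
    (hBY : ∀ i < ν, IsLarge M Kp Lp (B i \ Y)) (hT : T ∈ extensionBasis ν B p C Y) :
    IsLarge M Kp Lp T := by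
  rcases hT with ⟨i, hi, rfl⟩ | ⟨m, rfl⟩ | ⟨i, hi, x, hxi, rfl⟩
  · exact (hB i hi).mono subset_union_left
  · obtain ⟨x, hx⟩ := hC.nonempty m
    obtain ⟨k, hk, -, hkC⟩ := (hC.clopen m).1.2 x hx
    exact (hYB k hk).mono fun z hz => .inr ⟨hz.1, hkC hz.2⟩
  by_cases hxY : x ∈ Y
  · obtain ⟨n, hn, hn'⟩ := exists_mem_notMem_succ (hC.zero ▸ hYX hxY) (hYC x hxY)
    have hW := ((hC.clopen n).diff hd (hC.clopen (n + 1))).inter hd (isClopenIn_basic hd hi)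
    obtain ⟨k, hk, -, hkW⟩ := hW.1.2 x ⟨⟨hn, hn'⟩, hxi⟩
    refine (hYB k hk).mono fun z hz => ⟨(hkW hz.2).2, ?_⟩
    exact inter_diff_subset_stratum hC.antitone hxY hn hn' ⟨hz.1, (hkW hz.2).1⟩
  · rw [stratum_of_notMem hxY]
    exact hBY i hi

lemma convIn_extension_of_notMem (hd : IsDescription X ν B) (hp : p ∉ X)
    (hB₁ : B₁ '' Iio ν₁ = extensionBasis ν B p C Y) {A : Set α} (hx : x ∈ X) (hxY : x ∉ Y)
    (hA : ConvIn X ν B A x) (hAY : (A ∩ Y).Finite) : ConvIn (insert p X) ν₁ B₁ A x := by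
  have hxp : x ≠ p := fun h => hp (h ▸ hx)
  refine convIn_of_image_eq hB₁ fun T hT hxT => ?_
  rcases hT with ⟨i, hi, rfl⟩ | ⟨m, rfl⟩ | ⟨i, hi, y, -, rfl⟩
  · refine (hA _ (isClopenIn_basic hd hi).1 ((mem_adjoinLimit_of_ne hxp).mp hxT)).subset ?_
    exact sdiff_subset_sdiff_right subset_union_left
  · exact absurd ((mem_insert_iff.mp hxT).resolve_left hxp).1 hxY
  · rw [← stratum_eq_of_mem hxT.2, stratum_of_notMem hxY]
    refine ((hA _ (isClopenIn_basic hd hi).1 hxT.1).union hAY).subset ?_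
    rintro z ⟨hzA, hz⟩
    by_cases hzi : z ∈ B i
    · exact .inr ⟨hzA, not_not.mp fun hzY => hz ⟨hzi, hzY⟩⟩
    · exact .inl ⟨hzA, hzi⟩

lemma convIn_extension_self (hC : Antitone C) (hpB : ∀ i < ν, p ∉ B i)
    (hB₁ : B₁ '' Iio ν₁ = extensionBasis ν B p C Y) {A : Set α}
    (hA : ∀ m, (A \ limitNbhd p Y C m).Finite) : ConvIn (insert p X) ν₁ B₁ A p :=
  convIn_of_image_eq hB₁ fun _ hT hpT => by
    obtain ⟨m, hm⟩ := exists_limitNbhd_subset hC hpB hT hpT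
    exact (hA m).subset (sdiff_subset_sdiff_right (hm m le_rfl))

lemma descLE_extension (hd : IsDescription X ν B) (hC : IsDecidingChain X ν B C) (hp : p ∉ X)
    (hν : ν ≤ ν₁) (hB₁ : ∀ i < ν, B₁ i = adjoinLimit p C (B i)) :
    DescLE X ν B (insert p X) ν₁ B₁ := by
  have hpB : ∀ i < ν, p ∉ B i := fun i hi h => hp (hd.1 i hi h)
  have hres : ∀ i < ν, B₁ i ∩ X = B i := fun i hi => by
    rw [hB₁ i hi, adjoinLimit_inter hp (hd.1 i hi)]
  refine ⟨subset_insert _ _, hν, hres, fun i hi j hj => ⟨fun h => ?_, fun h => ?_⟩,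
    fun i hi j hj => ⟨fun h => ?_, fun h => ?_⟩⟩
  · rw [hB₁ i hi, hB₁ j hj]
    exact adjoinLimit_mono h
  · rw [← hres i hi, ← hres j hj]
    exact inter_subset_inter_left _ h
  · rw [hB₁ i hi, hB₁ j hj, ← disjoint_iff_inter_eq_empty]
    exact disjoint_adjoinLimit hC.antitone hC.nonempty (hpB i hi) (hpB j hj)
      (disjoint_iff_inter_eq_empty.mpr h)
  · rw [← hres i hi, ← hres j hj, ← subset_empty_iff, ← h]
    exact inter_subset_inter inter_subset_left inter_subset_left

end Extension

section Approx

variable {K L M : Set α} {Kp Lp : ℕ → Set α} {emb : Ordinal → α} {γ ν : Ordinal}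
  {B F : Ordinal → Set α} {C : ℕ → Set α}

lemma carrierOf_add_one :
    carrierOf K L M emb (γ + 1) = insert (emb γ) (carrierOf K L M emb γ) := by
  rw [carrierOf, carrierOf, ← Order.succ_eq_add_one, Order.Iio_succ, ← Iio_insert, image_insert_eq,
    union_insert]

lemma subset_carrierOf : K ∪ L ∪ M ⊆ carrierOf K L M emb γ := subset_union_left

lemma emb_mem_carrierOf {y : Ordinal} (hy : y < γ) : emb y ∈ carrierOf K L M emb γ :=
  .inr ⟨y, hy, rfl⟩

lemma _root_.SetupKLM.emb_notMem (hsetup : SetupKLM K L M Kp Lp emb) {y : Ordinal}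
    (hy : y < (Cardinal.aleph 1).ord) : emb y ∉ K ∪ L ∪ M := by
  obtain ⟨-, -, -, -, -, -, -, -, -, -, -, -, -, -, -, -, hemb⟩ := hsetup
  exact hemb y hy

lemma _root_.SetupKLM.emb_notMem_carrierOf (hsetup : SetupKLM K L M Kp Lp emb)
    (hγ : γ < (Cardinal.aleph 1).ord) : emb γ ∉ carrierOf K L M emb γ := by
  rintro (h | ⟨y, hy, hyγ⟩)
  · exact hsetup.emb_notMem hγ h
  · obtain ⟨-, -, -, -, -, -, -, -, -, -, -, -, -, -, -, hinj, -⟩ := hsetup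
    exact (mem_Iio.mp hy).ne (hinj y γ ((mem_Iio.mp hy).trans hγ) hγ hyγ)

lemma _root_.SetupKLM.disjoint_L (hsetup : SetupKLM K L M Kp Lp emb) : Disjoint K L := by
  obtain ⟨-, -, -, -, -, -, hKL, -⟩ := hsetup
  exact hKL

lemma _root_.SetupKLM.disjoint_M (hsetup : SetupKLM K L M Kp Lp emb) : Disjoint K M := by
  obtain ⟨-, -, -, -, -, -, -, hKM, -⟩ := hsetup
  exact hKM

lemma _root_.SetupKLM.disjoint_Lp (hsetup : SetupKLM K L M Kp Lp emb) (n : ℕ) :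
    Disjoint K (Lp n) := by
  obtain ⟨-, -, -, -, -, -, hKL, -, -, -, -, -, hLp, -⟩ := hsetup
  exact hKL.mono_right (hLp ▸ subset_iUnion Lp n)

lemma approxLE_refl (h : IsApprox K L M Kp Lp emb γ ν B F) :
    ApproxLE K L M Kp Lp emb γ ν B F γ ν B F :=
  ⟨le_rfl, ⟨subset_rfl, le_rfl, fun i hi => inter_eq_left.mpr (h.2.2.2.1.1 i hi),
    fun _ _ _ _ => Iff.rfl, fun _ _ _ _ => Iff.rfl⟩, fun _ _ => ⟨fun _ => rfl, fun _ => by simp⟩⟩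

lemma exists_split_of_isApprox (hsetup : SetupKLM K L M Kp Lp emb)
    (h0 : IsApprox K L M Kp Lp emb γ ν B F) :
    ∃ Z ⊆ K ∪ L ∪ M, (∀ i < ν, IsLarge M Kp Lp (B i ∩ Z) ∧ IsLarge M Kp Lp (B i \ Z)) ∧
      (∀ y < γ, ¬MemKK K Kp (F y) → (F y \ Z).Infinite) ∧
      ∀ y < γ, MemKK K Kp (F y) → (Z ∩ F y).Finite := by
  obtain ⟨-, -, -, -, -, -, hKL, hKM, -, hKp, -, -, hLp, -, -, -, -⟩ := hsetup
  obtain ⟨hγ, hν, -, -, hF, hB⟩ := h0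
  have hLM : ∀ y < γ, ¬MemKK K Kp (F y) → F y ⊆ L ∪ M := fun y hy hy' =>
    ((hF y hy).2.1.resolve_left hy').elim (fun h => h.1.trans subset_union_left)
      (·.trans subset_union_right)
  obtain ⟨Z, hZ, hZB, hZF, hZG⟩ := exists_isLarge_split (𝒰 := B '' Iio ν)
    (ℱ := F '' Iio γ \ {G | MemKK K Kp G}) (𝒢 := F '' Iio γ ∩ {G | MemKK K Kp G})
    ((countable_Iio_of_lt_omega1 hν).image B)
    (((countable_Iio_of_lt_omega1 hγ).image F).mono sdiff_subset)
    (((countable_Iio_of_lt_omega1 hγ).image F).mono inter_subset_left)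
    (by rintro _ ⟨i, hi, rfl⟩; exact hB i hi) (by rintro _ ⟨⟨y, hy, rfl⟩, -⟩; exact (hF y hy).1)
    (by
      rintro _ ⟨⟨y, hy, rfl⟩, hy'⟩ G ⟨-, hG⟩
      refine finite_empty.subset fun x hx => ?_
      rcases hLM y hy hy' hx.1 with h | h
      exacts [hKL.le_bot ⟨hG.1 hx.2, h⟩, hKM.le_bot ⟨hG.1 hx.2, h⟩])
    (fun G hG => hG.2) (fun n => hKp ▸ subset_iUnion Kp n) (fun n => hLp ▸ subset_iUnion Lp n)
    hKL hKM
  refine ⟨Z, hZ.trans (union_subset subset_rfl ?_), fun i hi => hZB _ (mem_image_of_mem B hi),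
    fun y hy hy' => hZF _ ⟨mem_image_of_mem F hy, hy'⟩,
    fun y hy hy' => hZG _ ⟨mem_image_of_mem F hy, hy'⟩⟩
  rintro x ⟨_, ⟨⟨y, hy, rfl⟩, hy'⟩, hx⟩
  exact (hLM y hy hy' hx).elim (fun h => .inl (.inr h)) .inr

lemma isApprox_extension (hsetup : SetupKLM K L M Kp Lp emb)
    (h0 : IsApprox K L M Kp Lp emb γ ν B F) (hC : IsDecidingChain (carrierOf K L M emb γ) ν B C)
    {Y : Set α} (hY : Y ⊆ K ∪ L ∪ M) (hYC : ∀ y ∈ Y, ∃ m, y ∉ C m)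
    (hYB : ∀ i < ν, IsLarge M Kp Lp (Y ∩ B i)) (hBY : ∀ i < ν, IsLarge M Kp Lp (B i \ Y))
    {B₁ F₁ : Ordinal → Set α}
    (hB₁ : B₁ '' Iio (ν + Ordinal.omega0) = extensionBasis ν B (emb γ) C Y)
    (hF₁ : ∀ y < γ, (F₁ y).Infinite ∧ (MemKK K Kp (F₁ y) ∨ MemLL L Lp (F₁ y) ∨ F₁ y ⊆ M) ∧
      F₁ y ⊆ F y ∧ (F₁ y ∩ Y).Finite)
    (hF₁γ : (F₁ γ).Infinite ∧ MemKK K Kp (F₁ γ) ∧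
      ∀ m, (F₁ γ \ limitNbhd (emb γ) Y C m).Finite) :
    IsApprox K L M Kp Lp emb (γ + 1) (ν + Ordinal.omega0) B₁ F₁ := by
  obtain ⟨hγ, hν, hX, hd, hF, hB⟩ := h0
  have hp := hsetup.emb_notMem_carrierOf hγ
  have hYX : Y ⊆ carrierOf K L M emb γ := hY.trans subset_carrierOf
  rw [IsApprox, carrierOf_add_one]
  refine ⟨add_lt_omega1 hγ one_lt_omega1, add_lt_omega1 hν omega0_lt_omega1, hX.insert _,
    isDescription_extension hd hC hp hYX hYC hB₁, fun y hy => ?_, fun i hi => ?_⟩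
  · rcases (Order.le_of_lt_succ hy).lt_or_eq with hy | rfl
    · obtain ⟨hinf, htype, hsub, hfin⟩ := hF₁ y hy
      refine ⟨hinf, htype, convIn_extension_of_notMem hd hp hB₁ (emb_mem_carrierOf hy)
        (fun h => hsetup.emb_notMem (hy.trans hγ) (hY h)) ((hF y hy).2.2.mono hsub) hfin⟩
    · exact ⟨hF₁γ.1, .inl hF₁γ.2.1, convIn_extension_self hC.antitone
        (fun i hi h => hp (hd.1 i hi h)) hB₁ hF₁γ.2.2⟩
  · exact isLarge_of_mem_extensionBasis hd hC hYX hYC hB hYB hBY (hB₁ ▸ mem_image_of_mem B₁ hi)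

lemma approxLE_extension (hsetup : SetupKLM K L M Kp Lp emb)
    (h0 : IsApprox K L M Kp Lp emb γ ν B F) (hC : IsDecidingChain (carrierOf K L M emb γ) ν B C)
    {ν₁ : Ordinal} {B₁ F₁ : Ordinal → Set α} (hν : ν ≤ ν₁)
    (hB₁ : ∀ i < ν, B₁ i = adjoinLimit (emb γ) C (B i))
    (hF₁ : ∀ y < γ, (MemKK K Kp (F y) → F₁ y = F y) ∧ F₁ y ⊆ F y) :
    ApproxLE K L M Kp Lp emb γ ν B F (γ + 1) ν₁ B₁ F₁ := by
  refine ⟨le_self_add, ?_, fun y hy => ⟨(hF₁ y hy).1, fun _ => ?_⟩⟩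
  · rw [carrierOf_add_one]
    exact descLE_extension h0.2.2.2.1 hC (hsetup.emb_notMem_carrierOf h0.1) hν hB₁
  · rw [sdiff_eq_empty.mpr (hF₁ y hy).2]
    exact finite_empty

def refineSeq (K : Set α) (Kp : ℕ → Set α) (Z A : Set α) : Set α :=
  open Classical in if MemKK K Kp A then A else A \ Z

lemma refineSeq_of_memKK {Z A : Set α} (hA : MemKK K Kp A) : refineSeq K Kp Z A = A :=
  if_pos hA

lemma refineSeq_subset {Z A : Set α} : refineSeq K Kp Z A ⊆ A := by
  unfold refineSeq
  split_ifs
  exacts [subset_rfl, sdiff_subset]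

lemma refineSeq_spec (hsetup : SetupKLM K L M Kp Lp emb) {A D Z Y : Set α} (hAinf : A.Infinite)
    (hA : MemKK K Kp A ∨ MemLL L Lp A ∨ A ⊆ M) (hD : MemKK K Kp D) (hY : Y ⊆ D ∪ Z)
    (hAZ : ¬MemKK K Kp A → (A \ Z).Infinite)
    (hAK : MemKK K Kp A → (A ∩ D).Finite ∧ (Z ∩ A).Finite) :
    (refineSeq K Kp Z A).Infinite ∧ (MemKK K Kp (refineSeq K Kp Z A) ∨
      MemLL L Lp (refineSeq K Kp Z A) ∨ refineSeq K Kp Z A ⊆ M) ∧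
      (refineSeq K Kp Z A ∩ Y).Finite := by
  by_cases hK : MemKK K Kp A
  · rw [refineSeq_of_memKK hK]
    refine ⟨hAinf, hA, ((hAK hK).1.union (hAK hK).2).subset fun z hz => ?_⟩
    exact (hY hz.2).elim (fun h => .inl ⟨hz.1, h⟩) fun h => .inr ⟨h, hz.1⟩
  rw [refineSeq, if_neg hK]
  have hz : ∀ z ∈ (A \ Z) ∩ Y, z ∈ K := fun z hz => hD.1 ((hY hz.2).resolve_right hz.1.2)
  rcases hA.resolve_left hK with hL | hM
  · exact ⟨hAZ hK, .inr (.inl ⟨sdiff_subset.trans hL.1, fun n => (hL.2 n).subset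
      (inter_subset_inter_left _ sdiff_subset)⟩), finite_empty.subset
        fun z hz' => hsetup.disjoint_L.le_bot ⟨hz z hz', hL.1 hz'.1.1⟩⟩
  · exact ⟨hAZ hK, .inr (.inr (sdiff_subset.trans hM)),
      finite_empty.subset fun z hz' => hsetup.disjoint_M.le_bot ⟨hz z hz', hM hz'.1.1⟩⟩

lemma exists_approx_with_limit (hsetup : SetupKLM K L M Kp Lp emb)
    (h0 : IsApprox K L M Kp Lp emb γ ν B F) (hC : IsDecidingChain (carrierOf K L M emb γ) ν B C)
    {D : Set α} (hD : MemKK K Kp D) (hDinf : D.Infinite) (hDC : ∀ m, (D \ C m).Finite)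
    (hDF : ∀ y < γ, MemKK K Kp (F y) → (F y ∩ D).Finite) :
    ∃ (γ₁ ν₁ : Ordinal) (B₁ F₁ : Ordinal → Set α), IsApprox K L M Kp Lp emb γ₁ ν₁ B₁ F₁ ∧
      ApproxLE K L M Kp Lp emb γ ν B F γ₁ ν₁ B₁ F₁ ∧ ∃ y < γ₁, F₁ y = D := by
  obtain ⟨Z, hZ, hZB, hZF, hZK⟩ := exists_split_of_isApprox hsetup h0
  -- every point of `Y` has to leave the chain; `⋂ m, C m` has at most one point
  set Y := (D ∪ Z) \ ⋂ m, C m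
  have hfin : (⋂ m, C m).Finite := (hC.subsingleton_iInter h0.2.2.2.1).finite
  obtain ⟨B₁, hB₁, hB₁img⟩ := exists_extend_image_eq ν (fun i => adjoinLimit (emb γ) C (B i))
    ((countable_extensionBasis (p := emb γ) (C := C) (Y := Y) h0.2.2.2.1
      (countable_Iio_of_lt_omega1 h0.2.1) h0.2.2.1).mono subset_union_right)
    ⟨_, .inl ⟨0, rfl⟩⟩
  let F₁ := Function.update (fun y => refineSeq K Kp Z (F y)) γ D
  have hF₁ : ∀ y < γ, F₁ y = refineSeq K Kp Z (F y) := fun y hy => Function.update_of_ne hy.ne _ _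
  have hDK : D ⊆ K ∪ L ∪ M := hD.1.trans (subset_union_left.trans subset_union_left)
  refine ⟨γ + 1, ν + Ordinal.omega0, B₁, F₁, isApprox_extension hsetup h0 hC
    (sdiff_subset.trans (union_subset hDK hZ)) (fun y hy => by simpa using hy.2)
    (fun i hi => ((hZB i hi).1.diff_finite hfin).mono fun z hz => ⟨⟨.inr hz.1.2, hz.2⟩, hz.1.1⟩)
    (fun i hi => ((hZB i hi).2.diff_memKK hD hsetup.disjoint_M hsetup.disjoint_Lp).mono
      fun z hz => ⟨hz.1.1, fun hzY => hzY.1.elim hz.2 hz.1.2⟩) hB₁img (fun y hy => ?_) ?_,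
    approxLE_extension hsetup h0 hC le_self_add hB₁ fun y hy => ?_, γ, lt_add_one γ,
    Function.update_self _ _ _⟩
  · obtain ⟨hinf, htype, hfin⟩ := refineSeq_spec hsetup (h0.2.2.2.2.1 y hy).1
      (h0.2.2.2.2.1 y hy).2.1 hD sdiff_subset (hZF y hy) fun hK => ⟨hDF y hy hK, hZK y hy hK⟩
    exact hF₁ y hy ▸ ⟨hinf, htype, refineSeq_subset, hfin⟩
  · rw [show F₁ γ = D from Function.update_self _ _ _]
    refine ⟨hDinf, hD, fun m => ((hDC m).union hfin).subset fun z hz => ?_⟩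
    by_cases hzC : z ∈ C m
    · exact .inr (not_not.mp fun hz' => hz.2 (.inr ⟨⟨.inl hz.1, hz'⟩, hzC⟩))
    · exact .inl ⟨hz.1, hzC⟩
  · rw [hF₁ y hy]
    exact ⟨refineSeq_of_memKK, refineSeq_subset⟩

end Approx

end Approximation

open Set Approximation in
/-- Lemma `lm:refine2`.  Let `𝔸⁰` be a countable approximation and let `K' ∈ 𝒦` be
infinite.  Then there is a countable approximation `𝔸¹ ⪰ 𝔸⁰` such that `F¹_y ∩ K'` is
infinite for some `y < γ¹`. -/
theorem refine_approx_K {α : Type*} (K L M : Set α) (Kp Lp : ℕ → Set α)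
    (emb : Ordinal → α) (hsetup : SetupKLM K L M Kp Lp emb)
    (γ0 ν0 : Ordinal) (B0 F0 : Ordinal → Set α)
    (h0 : IsApprox K L M Kp Lp emb γ0 ν0 B0 F0)
    (K' : Set α) (hK' : MemKK K Kp K') (hK'inf : K'.Infinite) :
    ∃ (γ1 ν1 : Ordinal) (B1 F1 : Ordinal → Set α),
      IsApprox K L M Kp Lp emb γ1 ν1 B1 F1 ∧
      ApproxLE K L M Kp Lp emb γ0 ν0 B0 F0 γ1 ν1 B1 F1 ∧
      ∃ y < γ1, (F1 y ∩ K').Infinite := by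
  by_cases hA : ∃ y < γ0, (F0 y ∩ K').Infinite
  · obtain ⟨y, hy, hinf⟩ := hA
    exact ⟨γ0, ν0, B0, F0, h0, approxLE_refl h0, y, hy, hinf⟩
  simp only [not_exists, not_and, not_infinite] at hA
  obtain ⟨C, hC, hCK'⟩ := exists_isDecidingChain h0.2.2.2.1 (countable_Iio_of_lt_omega1 h0.2.1)
    (hK'.1.trans (subset_union_left.trans (subset_union_left.trans subset_carrierOf))) hK'inf
  obtain ⟨D, hDK', hDinf, hDC, hDF⟩ := exists_infinite_almostSubset_almostDisjoint
    (T := fun m => C m ∩ K') (fun _ _ h => inter_subset_inter_left _ (hC.antitone h)) hCK'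
    (𝒢 := F0 '' Iio γ0 ∩ {G | MemKK K Kp G})
    (((countable_Iio_of_lt_omega1 h0.1).image F0).mono inter_subset_left)
    (by rintro _ ⟨⟨y, hy, rfl⟩, -⟩; exact (hA y hy).subset fun x hx => ⟨hx.2, hx.1.2⟩)
  replace hDK' : D ⊆ K' := hDK'.trans inter_subset_right
  obtain ⟨γ1, ν1, B1, F1, h1, hle, y, hy, rfl⟩ := exists_approx_with_limit hsetup h0 hC
    ⟨hDK'.trans hK'.1, fun n => (hK'.2 n).subset (inter_subset_inter_left _ hDK')⟩ hDinf
    (fun m => (hDC m).subset (sdiff_subset_sdiff_right inter_subset_left))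
    (fun y hy hyK => (hDF _ ⟨⟨y, hy, rfl⟩, hyK⟩).subset (inter_comm _ _).le)
  exact ⟨γ1, ν1, B1, F1, h1, hle, y, hy, by rwa [inter_eq_left.mpr hDK']⟩
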